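/- arXiv:2506.09415 — 3 statements merged into one kernel-verified Lean document; each statement's English description precedes it below -/
import Mathlib

section
/- The four antiparallel double-SIC vectors γ_1, γ_2, γ_3, γ_4 are linearly independent, hence form a basis of ℂ²⊗ℂ² ≅ ℂ⁴. (This is the content of the first part of Proposition 4: the ensemble S^{↑↓} admits conclusive global discrimination, and it trivially forms an unextendible product basis since it spans the full two-qubit space.) -/
noncomputable section
open scoped ComplexInnerProductSpace

/-- The qubit Hilbert space `ℂ²`. -/
abbrev Qubit : Type := EuclideanSpace ℂ (Fin 2)

/-- The (Kronecker) tensor product of two vectors, realized in `EuclideanSpace ℂ (ι × κ)`. -/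
def tp {ι κ : Type} (x : EuclideanSpace ℂ ι) (y : EuclideanSpace ℂ κ) :
    EuclideanSpace ℂ (ι × κ) :=
  (WithLp.equiv 2 (ι × κ → ℂ)).symm (fun p => x p.1 * y p.2)

/-- A qubit vector from its two coordinates. -/
def mk2 (a b : ℂ) : Qubit := (WithLp.equiv 2 (Fin 2 → ℂ)).symm ![a, b]

/-- The cube root of unity phases `ζ k = exp(2πik/3)`. -/
def ζ (k : ℤ) : ℂ := Complex.exp (2 * (Real.pi : ℂ) * Complex.I * (k : ℂ) / 3)

/-- `1/√3` in `ℂ`. -/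
def r3 : ℂ := ((Real.sqrt 3 : ℂ))⁻¹

/-- `√2` in `ℂ`. -/
def r2 : ℂ := (Real.sqrt 2 : ℂ)

/-- The qubit SIC states: `s 0 = |0⟩` and
`s j = (1/√3)(|0⟩ + √2 e^{2πi(j-1)/3} |1⟩)` for `j = 1, 2, 3`
(indexing the paper's `s_1, …, s_4` by `Fin 4`). -/
def s : Fin 4 → Qubit :=
  ![mk2 1 0,
    mk2 r3 (r3 * r2 * ζ 0),
    mk2 r3 (r3 * r2 * ζ 1),
    mk2 r3 (r3 * r2 * ζ 2)]

/-- The orthogonal SIC states: `sperp 0 = |1⟩` and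
`sperp j = (1/√3)(√2 e^{-2πi(j-1)/3} |0⟩ - |1⟩)` for `j = 1, 2, 3`. -/
def sperp : Fin 4 → Qubit :=
  ![mk2 0 1,
    mk2 (r3 * r2 * ζ 0) (-r3),
    mk2 (r3 * r2 * ζ (-1)) (-r3),
    mk2 (r3 * r2 * ζ (-2)) (-r3)]

/-- The antiparallel double-SIC vectors `γ_i = s_i ⊗ s_i^⊥`. -/
def γ (i : Fin 4) : EuclideanSpace ℂ (Fin 2 × Fin 2) := tp (s i) (sperp i)

/-!
The vectors `γ i` admit a biorthogonal family `γDual` with `⟪γDual i, γ j⟫ = 2 δᵢⱼ` (this is the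
conclusive discrimination of the ensemble), and a family with a biorthogonal partner is linearly
independent. Four independent vectors span the four-dimensional two-qubit space. The
biorthogonality relations come down to `1 + ω + ω² = 0` for the primitive cube root `ω = ζ 1`.
-/

open scoped ComplexConjugate

theorem linearIndependent_of_biorthogonal {ι R M : Type*} [CommRing R] [NoZeroDivisors R]
    [AddCommGroup M] [Module R M] {v : ι → M} (f : ι → Module.Dual R M)
    (h_off : ∀ i j, i ≠ j → f i (v j) = 0) (h_diag : ∀ i, f i (v i) ≠ 0) :
    LinearIndependent R v := by
  rw [linearIndependent_iff']
  intro t g hg i hi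
  have hfi : ∑ j ∈ t, g j * f i (v j) = 0 := by
    simpa only [map_sum, map_smul, smul_eq_mul, map_zero] using congrArg (f i) hg
  rw [Finset.sum_eq_single i (fun j _ hji => by rw [h_off i j hji.symm, mul_zero])
    (fun hi' => absurd hi hi')] at hfi
  exact (mul_eq_zero.mp hfi).resolve_right (h_diag i)

lemma ζ_eq_zpow (k : ℤ) : ζ k = ζ 1 ^ k := by
  rw [ζ, ζ, ← Complex.exp_int_mul]
  congr 1
  push_cast
  ring

lemma isPrimitiveRoot_ζ_one : IsPrimitiveRoot (ζ 1) 3 := by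
  convert Complex.isPrimitiveRoot_exp 3 (by norm_num) using 2
  simp [ζ]

lemma one_add_ζ_one_add_sq : 1 + ζ 1 + ζ 1 ^ 2 = 0 := by
  simpa [Finset.sum_range_succ, add_assoc] using
    isPrimitiveRoot_ζ_one.geom_sum_eq_zero (by norm_num)

lemma conj_ζ (k : ℤ) : conj (ζ k) = ζ (-k) := by
  rw [ζ, ζ, ← Complex.exp_conj]
  congr 1
  simp [map_ofNat]

lemma r2_sq : r2 ^ 2 = 2 := by
  rw [r2, ← Complex.ofReal_pow, Real.sq_sqrt (by norm_num)]
  norm_num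

lemma r3_sq : r3 ^ 2 = 1 / 3 := by
  rw [r3, inv_pow, ← Complex.ofReal_pow, Real.sq_sqrt (by norm_num)]
  norm_num

def twoQubit (A : Matrix (Fin 2) (Fin 2) ℂ) : EuclideanSpace ℂ (Fin 2 × Fin 2) :=
  WithLp.toLp 2 fun p => A p.1 p.2

/- With `ω = ζ 1`, `3 • γ (k + 1)` has amplitudes `(√2 ω⁻ᵏ, -1, 2, -√2 ωᵏ)` on
`|00⟩, |01⟩, |10⟩, |11⟩`, so `⟪γDual (m + 1), 3 • γ (k + 1)⟫ = 2 (1 + ωᵐ⁻ᵏ + ωᵏ⁻ᵐ)`, which vanishes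
unless `m = k`; `γDual 0` is the combination of `|01⟩` and `|10⟩` orthogonal to every `γ (k + 1)`. -/
def γDual : Fin 4 → EuclideanSpace ℂ (Fin 2 × Fin 2) :=
  ![twoQubit !![0, 2; 1, 0],
    twoQubit !![r2 * ζ 0, 0; 1, -(r2 * ζ 0)],
    twoQubit !![r2 * ζ (-1), 0; 1, -(r2 * ζ 1)],
    twoQubit !![r2 * ζ (-2), 0; 1, -(r2 * ζ 2)]]

lemma inner_γDual_γ (i j : Fin 4) : ⟪γDual i, γ j⟫ = if i = j then 2 else 0 := by
  have hω_sum := one_add_ζ_one_add_sq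
  have hr2_sq := r2_sq
  have hr3_sq := r3_sq
  have hr2_conj : conj r2 = r2 := Complex.conj_ofReal _
  have hζ0 : ζ 0 = 1 := by simp [ζ]
  have hζ2 : ζ 2 = ζ 1 ^ 2 := ζ_eq_zpow 2
  have hζm1 : ζ (-1) = (ζ 1)⁻¹ := by rw [ζ_eq_zpow, zpow_neg_one]
  have hζm2 : ζ (-2) = (ζ 1 ^ 2)⁻¹ := by rw [ζ_eq_zpow, zpow_neg, zpow_two, pow_two]
  simp only [PiLp.inner_apply, Fintype.sum_prod_type, Fin.sum_univ_two]
  fin_cases i <;> fin_cases j <;>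
    simp [γDual, γ, twoQubit, tp, s, sperp, mk2, conj_ζ] <;>
    grind

/-- The antiparallel double-SIC vectors are linearly independent, hence span all of
`ℂ²⊗ℂ² ≅ ℂ⁴`, i.e. they form a basis. -/
theorem antiparallel_double_SIC_linearly_independent :
    LinearIndependent ℂ γ ∧
    Submodule.span ℂ (Set.range γ) = (⊤ : Submodule ℂ (EuclideanSpace ℂ (Fin 2 × Fin 2))) := by
  have hli : LinearIndependent ℂ γ :=
    linearIndependent_of_biorthogonal (fun i => innerₛₗ ℂ (γDual i))
      (fun i j hij => by simp [inner_γDual_γ, hij])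
      (fun i => by simp [inner_γDual_γ])
  exact ⟨hli, hli.span_eq_top_of_card_eq_finrank (by simp)⟩
end
end

section
/- For all vectors α, β ∈ ℂ²⊗ℂ² ≅ ℂ⁴: if ⟨χ_{ij}, α ⊗ β⟩ = 0 for every ordered pair (i,j) with i, j ∈ {1,2,3,4} and i ≠ j, then α ⊗ β = 0 (i.e., α = 0 or β = 0). In other words, no nonzero product vector across the ℂ⁴ : ℂ⁴ bipartition lies in the orthogonal complement of the span of the 12 vectors χ_{ij}; the set S^{↑↓}_{(2)} is an unextendible product basis. (Key step of Theorem 2: S^{↑↓} does not allow 2-CLSM.) -/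
/-!
`⟪χ i j, α ⊗ β⟫` factors as `A (s i) (s j) * B (sperp i) (sperp j)`, where the sesquilinear
forms `A u v = ⟪u ⊗ v, α⟫` and `B u v = ⟪u ⊗ v, β⟫` live on `ℂ²`. Any two SIC states are
linearly independent, and so are any two of their orthogonal states; hence a nonzero semilinear
map on `ℂ²` vanishes at no more than one of them. If `A ≠ 0`, then `A (s i) ≠ 0` for at least
three `i`, and for each such `i` we have `A (s i) (s j) ≠ 0` for at least two `j ≠ i`, so
`B (sperp i)` vanishes at two of the `sperp j` and is therefore zero. Two such `i` force `B = 0`.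
-/

noncomputable section
open scoped ComplexInnerProductSpace

/-- The 2-CLSM vectors `χ_{ij} = (s_i ⊗ s_j) ⊗ (s_i^⊥ ⊗ s_j^⊥)`, the first `ℂ⁴` factor
being Alice's system and the second Bob's. -/
def χ (i j : Fin 4) : EuclideanSpace ℂ ((Fin 2 × Fin 2) × (Fin 2 × Fin 2)) :=
  tp (tp (s i) (s j)) (tp (sperp i) (sperp j))

open Module

section Dimension2

variable {K L V W ι : Type*} [Field K] [Field L] {σ : K →+* L}
  [AddCommGroup V] [Module K V] [AddCommGroup W] [Module K W]

theorem LinearMap.eq_zero_of_linearIndependent_pair {M : Type*} [AddCommGroup M] [Module L M]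
    (hV : finrank K V = 2) {f : V →ₛₗ[σ] M} {u v : V} (huv : LinearIndependent K ![u, v])
    (hu : f u = 0) (hv : f v = 0) : f = 0 :=
  (basisOfLinearIndependentOfCardEqFinrank huv (by simp [hV])).ext fun i => by
    fin_cases i <;> simpa

theorem LinearMap.subsingleton_setOf_apply_eq_zero {M : Type*} [AddCommGroup M] [Module L M]
    (hV : finrank K V = 2) {t : ι → V} (ht : Pairwise fun i j => LinearIndependent K ![t i, t j])
    {f : V →ₛₗ[σ] M} (hf : f ≠ 0) : {i | f (t i) = 0}.Subsingleton :=
  fun _ hi _ hj => by_contra fun hij => hf (f.eq_zero_of_linearIndependent_pair hV (ht hij) hi hj)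

theorem Set.exists_ne_notMem_of_ncard_le_two [Finite ι] (hι : 4 ≤ Nat.card ι) {Z : Set ι}
    (hZ : Z.ncard ≤ 2) : ∃ j j', j ≠ j' ∧ j ∉ Z ∧ j' ∉ Z := by
  have : 1 < Zᶜ.ncard := by rw [Z.ncard_compl]; omega
  obtain ⟨j, j', hj, hj', hjj'⟩ := (Set.one_lt_ncard_iff).1 this
  exact ⟨j, j', hjj', hj, hj'⟩

theorem eq_zero_or_eq_zero_of_pairwise_mul_eq_zero [Finite ι] (hι : 4 ≤ Nat.card ι)
    (hV : finrank K V = 2) (hW : finrank K W = 2) {t : ι → V} {x : ι → W}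
    (ht : Pairwise fun i j => LinearIndependent K ![t i, t j])
    (hx : Pairwise fun i j => LinearIndependent K ![x i, x j])
    {B : V →ₛₗ[σ] V →ₛₗ[σ] L} {C : W →ₛₗ[σ] W →ₛₗ[σ] L}
    (h : Pairwise fun i j => B (t i) (t j) * C (x i) (x j) = 0) : B = 0 ∨ C = 0 := by
  refine or_iff_not_imp_left.2 fun hB => ?_
  have hrow : ∀ i, B (t i) ≠ 0 → C (x i) = 0 := by
    intro i hBi
    have hZ : (insert i {j | B (t i) (t j) = 0}).ncard ≤ 2 :=
      (Set.ncard_insert_le _ _).trans <| by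
        simpa using (B (t i)).subsingleton_setOf_apply_eq_zero hV ht hBi
    have hC : ∀ k ∉ insert i {j | B (t i) (t j) = 0}, C (x i) (x k) = 0 := fun k hk =>
      have ⟨hki, hBk⟩ := not_or.1 hk
      (mul_eq_zero.1 (h (Ne.symm hki))).resolve_left hBk
    obtain ⟨j, j', hjj', hj, hj'⟩ := Set.exists_ne_notMem_of_ncard_le_two hι hZ
    exact (C (x i)).eq_zero_of_linearIndependent_pair hW (hx hjj') (hC j hj) (hC j' hj')
  have hZ : {i | B (t i) = 0}.ncard ≤ 2 :=
    (Set.ncard_le_one_iff_subsingleton.2 (B.subsingleton_setOf_apply_eq_zero hV ht hB)).trans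
      one_le_two
  obtain ⟨i, i', hii', hi, hi'⟩ := Set.exists_ne_notMem_of_ncard_le_two hι hZ
  exact C.eq_zero_of_linearIndependent_pair hW (hx hii') (hrow i hi) (hrow i' hi')

end Dimension2

section TensorProduct

variable {ι κ : Type}

@[simp] lemma tp_apply (x : EuclideanSpace ℂ ι) (y : EuclideanSpace ℂ κ) (p : ι × κ) :
    tp x y p = x p.1 * y p.2 := rfl

lemma tp_add_left (x x' : EuclideanSpace ℂ ι) (y : EuclideanSpace ℂ κ) :
    tp (x + x') y = tp x y + tp x' y := by ext; simp [add_mul]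

lemma tp_add_right (x : EuclideanSpace ℂ ι) (y y' : EuclideanSpace ℂ κ) :
    tp x (y + y') = tp x y + tp x y' := by ext; simp [mul_add]

lemma tp_smul_left (c : ℂ) (x : EuclideanSpace ℂ ι) (y : EuclideanSpace ℂ κ) :
    tp (c • x) y = c • tp x y := by ext; simp [mul_assoc]

lemma tp_smul_right (c : ℂ) (x : EuclideanSpace ℂ ι) (y : EuclideanSpace ℂ κ) :
    tp x (c • y) = c • tp x y := by ext; simp [mul_left_comm]

lemma tp_zero_left (y : EuclideanSpace ℂ κ) : tp (0 : EuclideanSpace ℂ ι) y = 0 := by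
  ext; simp

lemma tp_zero_right (x : EuclideanSpace ℂ ι) : tp x (0 : EuclideanSpace ℂ κ) = 0 := by
  ext; simp

lemma tp_single [DecidableEq ι] [DecidableEq κ] (a : ι) (b : κ) (c d : ℂ) :
    tp (EuclideanSpace.single a c) (EuclideanSpace.single b d) =
      EuclideanSpace.single (a, b) (c * d) := by
  ext ⟨a', b'⟩
  by_cases ha : a' = a <;> by_cases hb : b' = b <;> simp [ha, hb]

variable [Fintype ι] [Fintype κ]

lemma inner_tp_tp (a c : EuclideanSpace ℂ ι) (b d : EuclideanSpace ℂ κ) :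
    ⟪tp a b, tp c d⟫ = ⟪a, c⟫ * ⟪b, d⟫ := by
  simp only [PiLp.inner_apply, RCLike.inner_apply, tp_apply, map_mul, Fintype.sum_prod_type,
    Finset.sum_mul_sum]
  exact Finset.sum_congr rfl fun _ _ => Finset.sum_congr rfl fun _ _ => by ring

def tpForm (γ : EuclideanSpace ℂ (ι × κ)) :
    EuclideanSpace ℂ ι →ₗ⋆[ℂ] EuclideanSpace ℂ κ →ₗ⋆[ℂ] ℂ :=
  LinearMap.mk₂'ₛₗ _ _ (fun u v => ⟪tp u v, γ⟫)
    (fun _ _ _ => by rw [tp_add_left, inner_add_left])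
    (fun _ _ _ => by rw [tp_smul_left, inner_smul_left]; rfl)
    (fun _ _ _ => by rw [tp_add_right, inner_add_left])
    (fun _ _ _ => by rw [tp_smul_right, inner_smul_left]; rfl)

@[simp] lemma tpForm_apply (γ : EuclideanSpace ℂ (ι × κ)) (u : EuclideanSpace ℂ ι)
    (v : EuclideanSpace ℂ κ) : tpForm γ u v = ⟪tp u v, γ⟫ := rfl

lemma eq_zero_of_tpForm_eq_zero {γ : EuclideanSpace ℂ (ι × κ)} (h : tpForm γ = 0) : γ = 0 := by
  classical
  ext ⟨a, b⟩
  simpa [tp_single, EuclideanSpace.inner_single_left] using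
    congr($h (EuclideanSpace.single a 1) (EuclideanSpace.single b 1))

end TensorProduct

section SIC

lemma linearIndependent_mk2_pair {a b c d : ℂ} (h : a * d ≠ b * c) :
    LinearIndependent ℂ ![mk2 a b, mk2 c d] := by
  refine LinearIndependent.pair_iff.2 fun x y hxy => ?_
  have h0 : x * a + y * c = 0 := by simpa [mk2] using congr($hxy 0)
  have h1 : x * b + y * d = 0 := by simpa [mk2] using congr($hxy 1)
  have hdet : a * d - b * c ≠ 0 := sub_ne_zero.2 h
  have hx : x * (a * d - b * c) = 0 := by linear_combination d * h0 - c * h1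
  have hy : y * (a * d - b * c) = 0 := by linear_combination a * h1 - b * h0
  exact ⟨(mul_eq_zero.1 hx).resolve_right hdet, (mul_eq_zero.1 hy).resolve_right hdet⟩

lemma ζ_eq_ζ_iff (a b : ℤ) : ζ a = ζ b ↔ (3 : ℤ) ∣ a - b := by
  have hω := Complex.isPrimitiveRoot_exp 3 (by norm_num)
  have hω0 := hω.ne_zero (by norm_num)
  have hζ : ∀ k : ℤ, ζ k = Complex.exp (2 * Real.pi * Complex.I / (3 : ℕ)) ^ k := fun k => by
    rw [ζ, ← Complex.exp_int_mul]; congr 1; push_cast; ring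
  rw [hζ, hζ, ← div_eq_one_iff_eq (zpow_ne_zero _ hω0), ← zpow_sub₀ hω0, hω.zpow_eq_one_iff_dvd]
  rfl

@[simp] lemma ζ_ne_zero (k : ℤ) : ζ k ≠ 0 := Complex.exp_ne_zero _

@[simp] lemma r3_ne_zero : r3 ≠ 0 := by simp [r3]

@[simp] lemma r2_ne_zero : r2 ≠ 0 := by simp [r2]

lemma s_succ (k : Fin 3) : s k.succ = mk2 r3 (r3 * r2 * ζ k) := by fin_cases k <;> rfl

lemma sperp_succ (k : Fin 3) : sperp k.succ = mk2 (r3 * r2 * ζ (-k)) (-r3) := by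
  fin_cases k <;> rfl

lemma pairwise_linearIndependent_s : Pairwise fun i j => LinearIndependent ℂ ![s i, s j] := by
  intro i j hij
  induction i using Fin.cases with
  | zero =>
    induction j using Fin.cases with
    | zero => exact absurd rfl hij
    | succ k =>
      rw [s_succ]
      exact linearIndependent_mk2_pair (by simp)
  | succ k =>
    induction j using Fin.cases with
    | zero =>
      rw [s_succ]
      exact linearIndependent_mk2_pair (by simp)
    | succ k' =>
      have hkk' : k ≠ k' := fun e => hij (congrArg Fin.succ e)
      rw [s_succ, s_succ]
      refine linearIndependent_mk2_pair fun h => ?_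
      have : ζ k' = ζ k :=
        mul_left_cancel₀ (by simp : r3 * r3 * r2 ≠ 0)
          (by linear_combination h)
      rw [ζ_eq_ζ_iff] at this
      omega

lemma pairwise_linearIndependent_sperp :
    Pairwise fun i j => LinearIndependent ℂ ![sperp i, sperp j] := by
  intro i j hij
  induction i using Fin.cases with
  | zero =>
    induction j using Fin.cases with
    | zero => exact absurd rfl hij
    | succ k =>
      rw [sperp_succ]
      exact linearIndependent_mk2_pair (by simp)
  | succ k =>
    induction j using Fin.cases with
    | zero =>
      rw [sperp_succ]
      exact linearIndependent_mk2_pair (by simp)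
    | succ k' =>
      have hkk' : k ≠ k' := fun e => hij (congrArg Fin.succ e)
      rw [sperp_succ, sperp_succ]
      refine linearIndependent_mk2_pair fun h => ?_
      have : ζ (-k) = ζ (-k') :=
        mul_left_cancel₀ (by simp : r3 * r3 * r2 ≠ 0)
          (by linear_combination -h)
      rw [ζ_eq_ζ_iff] at this
      omega

end SIC

/-- If a product vector `α ⊗ β` (with `α, β ∈ ℂ²⊗ℂ² ≅ ℂ⁴`) is orthogonal to every
`χ_{ij}` with `i ≠ j`, then `α ⊗ β = 0`; i.e. `S^{↑↓}_{(2)}` is a UPB. -/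
theorem antiparallel_double_SIC_2CLSM_UPB
    (α β : EuclideanSpace ℂ (Fin 2 × Fin 2))
    (h : ∀ i j : Fin 4, i ≠ j → ⟪χ i j, tp α β⟫ = 0) :
    tp α β = 0 := by
  have hform : Pairwise fun i j => tpForm α (s i) (s j) * tpForm β (sperp i) (sperp j) = 0 :=
    fun i j hij => by simpa only [χ, inner_tp_tp, tpForm_apply] using h i j hij
  rcases eq_zero_or_eq_zero_of_pairwise_mul_eq_zero (by simp) finrank_euclideanSpace_fin
    finrank_euclideanSpace_fin pairwise_linearIndependent_s pairwise_linearIndependent_sperp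
    hform with hα | hβ
  · rw [eq_zero_of_tpForm_eq_zero hα, tp_zero_left]
  · rw [eq_zero_of_tpForm_eq_zero hβ, tp_zero_right]
end
end

section
/- There exist no vectors α, β ∈ ℂ²⊗ℂ² ≅ ℂ⁴ such that ⟨ξ_{ij}, α ⊗ β⟩ = 0 for every ordered pair (i,j) with i ≠ j and (i,j) ≠ (1,2), while ⟨ξ_{12}, α ⊗ β⟩ ≠ 0. That is, the state ξ_{12} admits no product detecting state across the ℂ⁴ : ℂ⁴ bipartition; hence, by Chefles' criterion, the set S^D_{(2)} is not conclusively distinguishable via LOCC, i.e., the Duan ensemble S^D does not allow 2-CLSM (Theorem 3). -/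
/-!
The overlap factorises, `⟪ξ i j, α ⊗ β⟫ = ⟪dA i ⊗ dA j, α⟫ * ⟪dB i ⊗ dB j, β⟫`. Writing
`a, b, c` and `p, q, r` for the coordinates of `α` and `β` at `00, 01, 10`, the conditions become
(up to a factor `1/2`) `b q ≠ 0`, `c r = 0`, `(a + b)(p + q) = 0`, `(a - i b)(p + i q) = 0`,
`(a + c)(p + r) = 0` and `(a - i c)(p + i r) = 0`. The linear forms `x + y` and `x + ω y` with
`ω ≠ 1` vanish together only at `0`; so the two equations in `b, q` force `a ≠ 0` and `p ≠ 0`,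
and then the two equations in `c, r` force `c ≠ 0` and `r ≠ 0`, contradicting `c r = 0`.
-/

noncomputable section
open scoped ComplexInnerProductSpace

/-- `1/√2` in `ℂ`. -/
def c2 : ℂ := ((Real.sqrt 2 : ℂ))⁻¹

/-- Alice's Duan states `|0⟩, |1⟩, |+⟩, |i₊⟩` (indexed by `Fin 4`). -/
def dA : Fin 4 → Qubit :=
  ![mk2 1 0, mk2 0 1, mk2 c2 c2, mk2 c2 (c2 * Complex.I)]

/-- Bob's Duan states `|0⟩, |1⟩, |+⟩, |i₋⟩` (indexed by `Fin 4`). -/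
def dB : Fin 4 → Qubit :=
  ![mk2 1 0, mk2 0 1, mk2 c2 c2, mk2 c2 (-(c2 * Complex.I))]

/-- The 2-CLSM vectors `ξ_{ij} = (d^i_A ⊗ d^j_A) ⊗ (d^i_B ⊗ d^j_B)`, the first `ℂ⁴`
factor being Alice's system and the second Bob's. -/
def ξ (i j : Fin 4) : EuclideanSpace ℂ ((Fin 2 × Fin 2) × (Fin 2 × Fin 2)) :=
  tp (tp (dA i) (dA j)) (tp (dB i) (dB j))

open ComplexConjugate Complex

section FieldAlgebra

variable {K : Type*} [Field K] {ω ω' a b c p q r x y : K}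

lemma eq_zero_of_add_eq_zero_of_add_mul_eq_zero (hω : ω ≠ 1) (h₁ : x + y = 0)
    (h₂ : x + ω * y = 0) : x = 0 ∧ y = 0 := by
  have hy : y = 0 := by
    have : (ω - 1) * y = 0 := by linear_combination h₂ - h₁
    exact (mul_eq_zero.mp this).resolve_left (sub_ne_zero.mpr hω)
  exact ⟨by linear_combination h₁ - hy, hy⟩

lemma ne_zero_and_ne_zero_of_add_mul_add_eq_zero (hω₀ : ω ≠ 0) (hω'₀ : ω' ≠ 0) (hω : ω ≠ 1)
    (hω' : ω' ≠ 1) (hb : b ≠ 0) (hq : q ≠ 0) (h₁ : (a + b) * (p + q) = 0)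
    (h₂ : (a + ω * b) * (p + ω' * q) = 0) : a ≠ 0 ∧ p ≠ 0 := by
  constructor
  · rintro rfl
    simp only [zero_add, mul_eq_zero, hb, hω₀, false_or] at h₁ h₂
    exact hq (eq_zero_of_add_eq_zero_of_add_mul_eq_zero hω' h₁ h₂).2
  · rintro rfl
    simp only [zero_add, mul_eq_zero, hq, hω'₀, or_false] at h₁ h₂
    exact hb (eq_zero_of_add_eq_zero_of_add_mul_eq_zero hω h₁ h₂).2

lemma mul_ne_zero_of_add_mul_add_eq_zero (hω : ω ≠ 1) (hω' : ω' ≠ 1) (ha : a ≠ 0) (hp : p ≠ 0)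
    (h₁ : (a + c) * (p + r) = 0) (h₂ : (a + ω * c) * (p + ω' * r) = 0) : c * r ≠ 0 := by
  intro hcr
  rcases mul_eq_zero.mp hcr with rfl | rfl
  · simp only [mul_zero, add_zero, mul_eq_zero, ha, false_or] at h₁ h₂
    exact hp (eq_zero_of_add_eq_zero_of_add_mul_eq_zero hω' h₁ h₂).1
  · simp only [mul_zero, add_zero, mul_eq_zero, hp, or_false] at h₁ h₂
    exact ha (eq_zero_of_add_eq_zero_of_add_mul_eq_zero hω h₁ h₂).1

end FieldAlgebra

lemma inner_tp_tp_s14 {ι κ : Type} [Fintype ι] [Fintype κ] (x x' : EuclideanSpace ℂ ι)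
    (y y' : EuclideanSpace ℂ κ) : ⟪tp x y, tp x' y'⟫ = ⟪x, x'⟫ * ⟪y, y'⟫ := by
  simp only [PiLp.inner_apply, tp, RCLike.inner_apply, Fintype.sum_prod_type, Finset.sum_mul_sum]
  refine Finset.sum_congr rfl fun i _ => Finset.sum_congr rfl fun j _ => ?_
  simp only [WithLp.equiv_symm_apply, map_mul]
  ring

lemma inner_tp_mk2_mk2 (x y z w : ℂ) (γ : EuclideanSpace ℂ (Fin 2 × Fin 2)) :
    ⟪tp (mk2 x y) (mk2 z w), γ⟫ = conj x * conj z * γ (0, 0) + conj x * conj w * γ (0, 1)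
      + conj y * conj z * γ (1, 0) + conj y * conj w * γ (1, 1) := by
  simp only [tp, mk2, WithLp.equiv_symm_apply, PiLp.inner_apply, RCLike.inner_apply, map_mul,
    Fintype.sum_prod_type, Fin.sum_univ_two, Matrix.cons_val_zero, Matrix.cons_val_one,
    Matrix.cons_val_fin_one]
  ring

lemma conj_c2 : conj c2 = c2 := by simp [c2]

lemma c2_mul_c2 : c2 * c2 = 2⁻¹ := by
  rw [c2, ← mul_inv, ← ofReal_mul, Real.mul_self_sqrt zero_le_two, ofReal_ofNat]

section Overlaps

variable (α β : EuclideanSpace ℂ (Fin 2 × Fin 2))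

lemma inner_ξ_tp (i j : Fin 4) :
    ⟪ξ i j, tp α β⟫ = ⟪tp (dA i) (dA j), α⟫ * ⟪tp (dB i) (dB j), β⟫ :=
  inner_tp_tp_s14 _ _ _ _

lemma inner_ξ_zero_one : ⟪ξ 0 1, tp α β⟫ = α (0, 1) * β (0, 1) := by
  simp [inner_ξ_tp, dA, dB, inner_tp_mk2_mk2]

lemma inner_ξ_one_zero : ⟪ξ 1 0, tp α β⟫ = α (1, 0) * β (1, 0) := by
  simp [inner_ξ_tp, dA, dB, inner_tp_mk2_mk2]

lemma inner_ξ_zero_two :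
    ⟪ξ 0 2, tp α β⟫ = 2⁻¹ * ((α (0, 0) + α (0, 1)) * (β (0, 0) + β (0, 1))) := by
  rw [← c2_mul_c2]
  simp only [inner_ξ_tp, dA, dB, Matrix.cons_val_zero, Matrix.cons_val, inner_tp_mk2_mk2,
    map_one, map_zero, conj_c2]
  ring

lemma inner_ξ_two_zero :
    ⟪ξ 2 0, tp α β⟫ = 2⁻¹ * ((α (0, 0) + α (1, 0)) * (β (0, 0) + β (1, 0))) := by
  rw [← c2_mul_c2]
  simp only [inner_ξ_tp, dA, dB, Matrix.cons_val_zero, Matrix.cons_val, inner_tp_mk2_mk2,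
    map_one, map_zero, conj_c2]
  ring

lemma inner_ξ_zero_three :
    ⟪ξ 0 3, tp α β⟫ = 2⁻¹ * ((α (0, 0) + -I * α (0, 1)) * (β (0, 0) + I * β (0, 1))) := by
  rw [← c2_mul_c2]
  simp only [inner_ξ_tp, dA, dB, Matrix.cons_val_zero, Matrix.cons_val, inner_tp_mk2_mk2,
    map_one, map_zero, map_mul, map_neg, conj_I, conj_c2]
  ring

lemma inner_ξ_three_zero :
    ⟪ξ 3 0, tp α β⟫ = 2⁻¹ * ((α (0, 0) + -I * α (1, 0)) * (β (0, 0) + I * β (1, 0))) := by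
  rw [← c2_mul_c2]
  simp only [inner_ξ_tp, dA, dB, Matrix.cons_val_zero, Matrix.cons_val, inner_tp_mk2_mk2,
    map_one, map_zero, map_mul, map_neg, conj_I, conj_c2]
  ring

end Overlaps

lemma I_ne_one : I ≠ 1 := by simp [Complex.ext_iff]

lemma neg_I_ne_one : -I ≠ 1 := by simp [Complex.ext_iff]

/-- The paper's indices `1, …, 4` are `0, …, 3` in `Fin 4`. -/
theorem duan_2CLSM_no_product_detecting_state :
    ¬ ∃ α β : EuclideanSpace ℂ (Fin 2 × Fin 2),
      (∀ i j : Fin 4, i ≠ j → (i, j) ≠ ((0 : Fin 4), (1 : Fin 4)) →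
        ⟪ξ i j, tp α β⟫ = 0) ∧
      ⟪ξ 0 1, tp α β⟫ ≠ 0 := by
  rintro ⟨α, β, h, h01⟩
  have half_vanish {i j : Fin 4} (hij : i ≠ j) (hne : (i, j) ≠ (0, 1)) {z : ℂ}
      (hz : ⟪ξ i j, tp α β⟫ = 2⁻¹ * z) : z = 0 := by
    simpa [hz] using h i j hij hne
  obtain ⟨hb, hq⟩ := mul_ne_zero_iff.mp (inner_ξ_zero_one α β ▸ h01)
  have h10 := inner_ξ_one_zero α β ▸ h 1 0 (by decide) (by decide)
  have h02 := half_vanish (by decide) (by decide) (inner_ξ_zero_two α β)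
  have h03 := half_vanish (by decide) (by decide) (inner_ξ_zero_three α β)
  have h20 := half_vanish (by decide) (by decide) (inner_ξ_two_zero α β)
  have h30 := half_vanish (by decide) (by decide) (inner_ξ_three_zero α β)
  obtain ⟨ha, hp⟩ := ne_zero_and_ne_zero_of_add_mul_add_eq_zero (neg_ne_zero.mpr I_ne_zero)
    I_ne_zero neg_I_ne_one I_ne_one hb hq h02 h03
  exact mul_ne_zero_of_add_mul_add_eq_zero neg_I_ne_one I_ne_one ha hp h20 h30 h10
end
end
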